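/- Let (M,d,+) be a complete metric semigroup, κ a distortion function, and p ∈ (1,∞). A set A ⊆ κBV(I×I,M) is precompact if (i) A is joint equivariated: for every ε>0 there exist partitions Π_ε, Π*_ε such that V_κ(f,g) ≤ ε + V_κ(f,g,Π_ε×Π*_ε) for all f,g ∈ A; and (ii) for every t,s ∈ [0,1], the set {f(t,s) : f ∈ A} is precompact in M. -/
import Mathlib


open Finset

/-- `t` represents a partition `0 = t 0 < t 1 < ⋯ < t n = 1` of `[0,1]`. -/
def IsPartition (n : ℕ) (t : ℕ → ℝ) : Prop :=
  0 < n ∧ t 0 = 0 ∧ t n = 1 ∧ ∀ i < n, t i < t (i + 1)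

/-- `κ : [0,1] → [0,1]` is a distortion function: increasing, concave,
`κ(0) = 0`, `κ(1) = 1`, and `κ(t)/t → ∞` as `t → 0⁺`. -/
def IsDistortion (κ : ℝ → ℝ) : Prop :=
  MonotoneOn κ (Set.Icc 0 1) ∧ ConcaveOn ℝ (Set.Icc 0 1) κ
  ∧ (∀ t ∈ Set.Icc (0:ℝ) 1, κ t ∈ Set.Icc (0:ℝ) 1)
  ∧ κ 0 = 0 ∧ κ 1 = 1
  ∧ Filter.Tendsto (fun t => κ t / t) (nhdsWithin 0 (Set.Ioi 0)) Filter.atTop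

variable {M : Type*} [MetricSpace M] [AddCommSemigroup M]

noncomputable def kSum1 (κ : ℝ → ℝ) (p : ℝ) (f : ℝ → ℝ → M) (n : ℕ) (t : ℕ → ℝ) : ℝ :=
  (∑ i ∈ range n, dist (f (t (i + 1)) 0) (f (t i) 0) / κ (t (i + 1) - t i)) ^ (1 / p)

noncomputable def kSum2 (κ : ℝ → ℝ) (p : ℝ) (f : ℝ → ℝ → M) (m : ℕ) (s : ℕ → ℝ) : ℝ :=
  (∑ j ∈ range m, dist (f 0 (s (j + 1))) (f 0 (s j)) / κ (s (j + 1) - s j)) ^ (1 / p)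

noncomputable def kSum12 (κ : ℝ → ℝ) (p : ℝ) (f : ℝ → ℝ → M) (n : ℕ) (t : ℕ → ℝ)
    (m : ℕ) (s : ℕ → ℝ) : ℝ :=
  (∑ j ∈ range m, ∑ i ∈ range n,
    dist (f (t (i + 1)) (s (j + 1)) + f (t i) (s j))
         (f (t (i + 1)) (s j) + f (t i) (s (j + 1)))
      / (κ (t (i + 1) - t i) * κ (s (j + 1) - s j))) ^ (1 / p)

noncomputable def kSum1J (κ : ℝ → ℝ) (p : ℝ) (f g : ℝ → ℝ → M) (n : ℕ) (t : ℕ → ℝ) : ℝ :=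
  (∑ i ∈ range n,
    dist (f (t (i + 1)) 0 + g (t i) 0) (f (t i) 0 + g (t (i + 1)) 0)
      / κ (t (i + 1) - t i)) ^ (1 / p)

noncomputable def kSum2J (κ : ℝ → ℝ) (p : ℝ) (f g : ℝ → ℝ → M) (m : ℕ) (s : ℕ → ℝ) : ℝ :=
  (∑ j ∈ range m,
    dist (f 0 (s (j + 1)) + g 0 (s j)) (f 0 (s j) + g 0 (s (j + 1)))
      / κ (s (j + 1) - s j)) ^ (1 / p)

noncomputable def kSum12J (κ : ℝ → ℝ) (p : ℝ) (f g : ℝ → ℝ → M) (n : ℕ) (t : ℕ → ℝ)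
    (m : ℕ) (s : ℕ → ℝ) : ℝ :=
  (∑ j ∈ range m, ∑ i ∈ range n,
    dist (f (t (i + 1)) (s (j + 1)) + f (t i) (s j)
            + g (t (i + 1)) (s j) + g (t i) (s (j + 1)))
         (g (t (i + 1)) (s (j + 1)) + g (t i) (s j)
            + f (t (i + 1)) (s j) + f (t i) (s (j + 1)))
      / (κ (t (i + 1) - t i) * κ (s (j + 1) - s j))) ^ (1 / p)

def kSet1 (κ : ℝ → ℝ) (p : ℝ) (f : ℝ → ℝ → M) : Set ℝ :=
  {x | ∃ n t, IsPartition n t ∧ x = kSum1 κ p f n t}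

def kSet2 (κ : ℝ → ℝ) (p : ℝ) (f : ℝ → ℝ → M) : Set ℝ :=
  {x | ∃ m s, IsPartition m s ∧ x = kSum2 κ p f m s}

def kSet12 (κ : ℝ → ℝ) (p : ℝ) (f : ℝ → ℝ → M) : Set ℝ :=
  {x | ∃ n t m s, IsPartition n t ∧ IsPartition m s ∧ x = kSum12 κ p f n t m s}

/-- Total Korenblum variation `V_κ(f)`. -/
noncomputable def VKap (κ : ℝ → ℝ) (p : ℝ) (f : ℝ → ℝ → M) : ℝ :=
  sSup (kSet1 κ p f) + sSup (kSet2 κ p f) + sSup (kSet12 κ p f)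

/-- `f` has bounded bivariate Korenblum variation. -/
def MemKapBV (κ : ℝ → ℝ) (p : ℝ) (f : ℝ → ℝ → M) : Prop :=
  BddAbove (kSet1 κ p f) ∧ BddAbove (kSet2 κ p f) ∧ BddAbove (kSet12 κ p f)

/-- Joint Korenblum variation over a fixed pair of partitions, `V_κ(f,g,Π×Π*)`. -/
noncomputable def VKapPart (κ : ℝ → ℝ) (p : ℝ) (f g : ℝ → ℝ → M) (n : ℕ) (t : ℕ → ℝ)
    (m : ℕ) (s : ℕ → ℝ) : ℝ :=
  kSum1J κ p f g n t + kSum2J κ p f g m s + kSum12J κ p f g n t m s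

def kSetJ (κ : ℝ → ℝ) (p : ℝ) (f g : ℝ → ℝ → M) : Set ℝ :=
  {x | ∃ n t m s, IsPartition n t ∧ IsPartition m s ∧ x = VKapPart κ p f g n t m s}

/-- Joint Korenblum variation `V_κ(f,g)`. -/
noncomputable def VKapJ (κ : ℝ → ℝ) (p : ℝ) (f g : ℝ → ℝ → M) : ℝ :=
  sSup (kSetJ κ p f g)

/-- The metric `ρ_κ(f,g) = d(f(0,0), g(0,0)) + V_κ(f,g)`. -/
noncomputable def rhoKap (κ : ℝ → ℝ) (p : ℝ) (f g : ℝ → ℝ → M) : ℝ :=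
  dist (f 0 0) (g 0 0) + VKapJ κ p f g


section Aux

variable {M : Type*} [MetricSpace M] [AddCommSemigroup M]

private lemma aux_dist_add_add (hd : ∀ u v w : M, dist (u + w) (v + w) = dist u v)
    (a a' b b' : M) : dist (a + b) (a' + b') ≤ dist a a' + dist b b' := by
  calc dist (a + b) (a' + b') ≤ dist (a + b) (a' + b) + dist (a' + b) (a' + b') :=
        dist_triangle _ _ _
    _ = dist a a' + dist b b' := by rw [hd, add_comm a' b, add_comm a' b', hd]

private lemma aux_dist4 (hd : ∀ u v w : M, dist (u + w) (v + w) = dist u v)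
    (a a' b b' c c' d d' : M) :
    dist (a + b + c + d) (a' + b' + c' + d')
      ≤ dist a a' + dist b b' + (dist c c' + dist d d') := by
  have e1 : a + b + c + d = (a + b) + (c + d) := by rw [add_assoc]
  have e2 : a' + b' + c' + d' = (a' + b') + (c' + d') := by rw [add_assoc]
  rw [e1, e2]
  calc dist ((a + b) + (c + d)) ((a' + b') + (c' + d'))
      ≤ dist (a + b) (a' + b') + dist (c + d) (c' + d') := aux_dist_add_add hd _ _ _ _
    _ ≤ (dist a a' + dist b b') + (dist c c' + dist d d') :=
        add_le_add (aux_dist_add_add hd _ _ _ _) (aux_dist_add_add hd _ _ _ _)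

private lemma aux_part_mono {n : ℕ} {t : ℕ → ℝ} (h : IsPartition n t) :
    ∀ i j, i ≤ j → j ≤ n → t i ≤ t j := by
  intro i j hij hjn
  induction j with
  | zero =>
    obtain rfl : i = 0 := Nat.le_zero.mp hij
    exact le_rfl
  | succ j ih =>
    rcases Nat.lt_or_ge i (j + 1) with hlt | hge
    · have h1 : t i ≤ t j := ih (Nat.lt_succ_iff.mp hlt) (le_trans (Nat.le_succ j) hjn)
      exact h1.trans (h.2.2.2 j (by omega)).le
    · obtain rfl : i = j + 1 := le_antisymm hij hge
      exact le_rfl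

private lemma aux_part_mem {n : ℕ} {t : ℕ → ℝ} (h : IsPartition n t) {i : ℕ} (hi : i ≤ n) :
    t i ∈ Set.Icc (0 : ℝ) 1 := by
  constructor
  · have := aux_part_mono h 0 i (Nat.zero_le _) hi
    rw [h.2.1] at this; exact this
  · have := aux_part_mono h i n hi le_rfl
    rw [h.2.2.1] at this; exact this

private lemma aux_kappa_pos {κ : ℝ → ℝ} (hκ : IsDistortion κ) {x : ℝ}
    (hx0 : 0 < x) (hx1 : x ≤ 1) : 0 < κ x := by
  obtain ⟨hmono, -, -, h0, h1, htend⟩ := hκ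
  have hev := htend.eventually_ge_atTop 1
  rw [eventually_nhdsWithin_iff, Metric.eventually_nhds_iff] at hev
  obtain ⟨δ, hδ, hball⟩ := hev
  set y := min x (δ / 2) with hy
  have hy0 : 0 < y := lt_min hx0 (by linarith)
  have hyd : dist y 0 < δ := by
    rw [Real.dist_eq, sub_zero, abs_of_pos hy0]
    exact lt_of_le_of_lt (min_le_right _ _) (by linarith)
  have h1y : 1 ≤ κ y / y := hball hyd (Set.mem_Ioi.mpr hy0)
  have hky : y ≤ κ y := by
    rw [le_div_iff₀ hy0] at h1y; linarith
  have hmon := hmono (Set.mem_Icc.mpr ⟨hy0.le, (min_le_left _ _).trans hx1⟩)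
    (Set.mem_Icc.mpr ⟨hx0.le, hx1⟩) (min_le_left _ _)
  linarith

private lemma aux_rpow_lt {S C η p : ℝ} (hS0 : 0 ≤ S) (hSC : S ≤ C) (hC : C < η ^ p)
    (hη : 0 ≤ η) (hp : 0 < p) : S ^ (1 / p) < η := by
  have hC0 : 0 ≤ C := hS0.trans hSC
  calc S ^ (1 / p) ≤ C ^ (1 / p) := Real.rpow_le_rpow hS0 hSC (by positivity)
    _ < (η ^ p) ^ (1 / p) := Real.rpow_lt_rpow hC0 hC (by positivity)
    _ = η := by rw [one_div, Real.rpow_rpow_inv hη hp.ne']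

end Aux

/-- Sufficient conditions for precompactness (total boundedness w.r.t. `ρ_κ`)
of a set `A ⊆ κBV(I×I, M)`: (i) `A` is joint equivariated, and (ii) each
pointwise section `{f(t,s) : f ∈ A}` is precompact in `M`. -/
theorem KapBV_precompact [CompleteSpace M] (κ : ℝ → ℝ) (hκ : IsDistortion κ)
    (p : ℝ) (hp : 1 < p)
    (hd : ∀ u v w : M, dist (u + w) (v + w) = dist u v)
    (A : Set (ℝ → ℝ → M)) (hA : ∀ f ∈ A, MemKapBV κ p f)
    (hequi : ∀ ε > (0:ℝ), ∃ n t m s, IsPartition n t ∧ IsPartition m s ∧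
      ∀ f ∈ A, ∀ g ∈ A, VKapJ κ p f g ≤ ε + VKapPart κ p f g n t m s)
    (hpt : ∀ t ∈ Set.Icc (0:ℝ) 1, ∀ s ∈ Set.Icc (0:ℝ) 1,
      IsCompact (closure {x : M | ∃ f ∈ A, f t s = x})) :
    ∀ ε > (0:ℝ), ∃ G : Set (ℝ → ℝ → M), G ⊆ A ∧ G.Finite ∧
      ∀ f ∈ A, ∃ g ∈ G, rhoKap κ p f g < ε := by
  intro ε hε
  obtain ⟨n, t, m, s, hPt, hPs, hVJ⟩ := hequi (ε / 2) (by linarith)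
  have ht0 : t 0 = 0 := hPt.2.1
  have hs0 : s 0 = 0 := hPs.2.1
  have hp0 : 0 < p := by linarith
  have hκt : ∀ i < n, 0 < κ (t (i + 1) - t i) := by
    intro i hi
    have h1 : t i < t (i + 1) := hPt.2.2.2 i hi
    have h2 := aux_part_mem hPt (le_of_lt hi)
    have h3 := aux_part_mem hPt (show i + 1 ≤ n from hi)
    exact aux_kappa_pos hκ (by linarith) (by
      obtain ⟨h2a, h2b⟩ := h2; obtain ⟨h3a, h3b⟩ := h3; linarith)
  have hκs : ∀ j < m, 0 < κ (s (j + 1) - s j) := by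
    intro j hj
    have h1 : s j < s (j + 1) := hPs.2.2.2 j hj
    have h2 := aux_part_mem hPs (le_of_lt hj)
    have h3 := aux_part_mem hPs (show j + 1 ≤ m from hj)
    exact aux_kappa_pos hκ (by linarith) (by
      obtain ⟨h2a, h2b⟩ := h2; obtain ⟨h3a, h3b⟩ := h3; linarith)
  set K₁ : ℝ := ∑ i ∈ range n, 2 / κ (t (i + 1) - t i) with hK₁def
  set K₂ : ℝ := ∑ j ∈ range m, 2 / κ (s (j + 1) - s j) with hK₂def
  set K₃ : ℝ := ∑ j ∈ range m, ∑ i ∈ range n,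
    4 / (κ (t (i + 1) - t i) * κ (s (j + 1) - s j)) with hK₃def
  have hK₁0 : 0 ≤ K₁ :=
    Finset.sum_nonneg fun i hi => (div_pos two_pos (hκt i (Finset.mem_range.mp hi))).le
  have hK₂0 : 0 ≤ K₂ :=
    Finset.sum_nonneg fun j hj => (div_pos two_pos (hκs j (Finset.mem_range.mp hj))).le
  have hK₃0 : 0 ≤ K₃ := Finset.sum_nonneg fun j hj => Finset.sum_nonneg fun i hi =>
    (div_pos four_pos (mul_pos (hκt i (Finset.mem_range.mp hi))
      (hκs j (Finset.mem_range.mp hj)))).le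
  set K : ℝ := K₁ + K₂ + K₃ + 1 with hKdef
  have hK : 0 < K := by linarith
  set η : ℝ := ε / 8 with hηdef
  have hη : 0 < η := by rw [hηdef]; linarith
  have hηp : 0 < η ^ p := Real.rpow_pos_of_pos hη p
  set δ : ℝ := min η (η ^ p / K) with hδdef
  have hδ0 : 0 < δ := lt_min hη (div_pos hηp hK)
  have hδη : δ ≤ η := min_le_left _ _
  have hδK : ∀ c : ℝ, 0 ≤ c → c ≤ K - 1 → δ * c < η ^ p := by
    intro c hc0 hc1
    have h1 : δ * c ≤ (η ^ p / K) * c :=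
      mul_le_mul_of_nonneg_right (min_le_right _ _) hc0
    have h2 : (η ^ p / K) * c ≤ (η ^ p / K) * (K - 1) :=
      mul_le_mul_of_nonneg_left hc1 (div_pos hηp hK).le
    have h3 : (η ^ p / K) * (K - 1) < (η ^ p / K) * K :=
      mul_lt_mul_of_pos_left (by linarith) (div_pos hηp hK)
    have h4 : (η ^ p / K) * K = η ^ p := div_mul_cancel₀ _ hK.ne'
    linarith
  -- build the finite net via pointwise precompactness
  set Φ : (ℝ → ℝ → M) → (Fin (n + 1) × Fin (m + 1) → M) :=
    fun f q => f (t q.1) (s q.2) with hΦdef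
  have himg : Φ '' A ⊆ Set.pi Set.univ
      (fun q : Fin (n + 1) × Fin (m + 1) =>
        closure {x : M | ∃ f ∈ A, f (t q.1) (s q.2) = x}) := by
    rintro _ ⟨f, hf, rfl⟩ q -
    exact subset_closure ⟨f, hf, rfl⟩
  have hcomp : IsCompact (Set.pi Set.univ
      (fun q : Fin (n + 1) × Fin (m + 1) =>
        closure {x : M | ∃ f ∈ A, f (t q.1) (s q.2) = x})) :=
    isCompact_univ_pi fun q => hpt _ (aux_part_mem hPt (Nat.lt_succ_iff.mp q.1.isLt))
      _ (aux_part_mem hPs (Nat.lt_succ_iff.mp q.2.isLt))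
  have htb : TotallyBounded (Φ '' A) := hcomp.totallyBounded.subset himg
  obtain ⟨Y, hYsub, hYfin, hYcov⟩ :=
    totallyBounded_iff_subset.mp htb _ (Metric.dist_mem_uniformity hδ0)
  have hchoice : ∀ y, y ∈ Y → ∃ g, g ∈ A ∧ Φ g = y := by
    intro y hy
    obtain ⟨g, hg, hgy⟩ := hYsub hy
    exact ⟨g, hg, hgy⟩
  choose gfun hgA hgΦ using hchoice
  refine ⟨{h | ∃ y, ∃ hy : y ∈ Y, gfun y hy = h}, ?_, hYfin.dependent_image gfun, ?_⟩
  · rintro _ ⟨y, hy, rfl⟩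
    exact hgA y hy
  intro f hf
  have hfm := hYcov (Set.mem_image_of_mem Φ hf)
  simp only [Set.mem_iUnion, Set.mem_setOf_eq] at hfm
  obtain ⟨y, hy, hdy⟩ := hfm
  refine ⟨gfun y hy, ⟨y, hy, rfl⟩, ?_⟩
  set g := gfun y hy with hgdef
  have hgmem : g ∈ A := hgA y hy
  have hdist : dist (Φ f) (Φ g) < δ := by rw [hgΦ y hy]; exact hdy
  have hcl : ∀ i ≤ n, ∀ j ≤ m, dist (f (t i) (s j)) (g (t i) (s j)) < δ := by
    intro i hi j hj
    exact (dist_pi_lt_iff hδ0).mp hdist (⟨i, Nat.lt_succ_of_le hi⟩, ⟨j, Nat.lt_succ_of_le hj⟩)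
  have hcl0 : ∀ i ≤ n, dist (f (t i) 0) (g (t i) 0) < δ := by
    intro i hi
    have := hcl i hi 0 (Nat.zero_le m)
    rwa [hs0] at this
  have hcl0' : ∀ j ≤ m, dist (f 0 (s j)) (g 0 (s j)) < δ := by
    intro j hj
    have := hcl 0 (Nat.zero_le n) j hj
    rwa [ht0] at this
  -- bound kSum1J
  have hterm1 : kSum1J κ p f g n t < η := by
    unfold kSum1J
    have hsum : ∑ i ∈ range n,
        dist (f (t (i + 1)) 0 + g (t i) 0) (f (t i) 0 + g (t (i + 1)) 0)
          / κ (t (i + 1) - t i) ≤ δ * K₁ := by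
      rw [hK₁def, Finset.mul_sum]
      apply Finset.sum_le_sum
      intro i hi
      have hi' := Finset.mem_range.mp hi
      have hκi := hκt i hi'
      have h1 : dist (f (t (i + 1)) 0) (g (t (i + 1)) 0) < δ := hcl0 (i + 1) hi'
      have h2 : dist (g (t i) 0) (f (t i) 0) < δ := by
        rw [dist_comm]; exact hcl0 i (le_of_lt hi')
      have hnum : dist (f (t (i + 1)) 0 + g (t i) 0) (f (t i) 0 + g (t (i + 1)) 0)
          ≤ dist (f (t (i + 1)) 0) (g (t (i + 1)) 0) + dist (g (t i) 0) (f (t i) 0) := by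
        rw [add_comm (f (t i) 0) (g (t (i + 1)) 0)]
        exact aux_dist_add_add hd _ _ _ _
      calc dist (f (t (i + 1)) 0 + g (t i) 0) (f (t i) 0 + g (t (i + 1)) 0)
          / κ (t (i + 1) - t i)
          ≤ (δ + δ) / κ (t (i + 1) - t i) := by
            apply div_le_div_of_nonneg_right ?_ hκi.le |>.trans_eq rfl
            · linarith
        _ = δ * (2 / κ (t (i + 1) - t i)) := by ring
    exact aux_rpow_lt
      (Finset.sum_nonneg fun i hi =>
        div_nonneg dist_nonneg (hκt i (Finset.mem_range.mp hi)).le)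
      hsum (hδK K₁ hK₁0 (by rw [hKdef]; linarith)) hη.le hp0
  -- bound kSum2J
  have hterm2 : kSum2J κ p f g m s < η := by
    unfold kSum2J
    have hsum : ∑ j ∈ range m,
        dist (f 0 (s (j + 1)) + g 0 (s j)) (f 0 (s j) + g 0 (s (j + 1)))
          / κ (s (j + 1) - s j) ≤ δ * K₂ := by
      rw [hK₂def, Finset.mul_sum]
      apply Finset.sum_le_sum
      intro j hj
      have hj' := Finset.mem_range.mp hj
      have hκj := hκs j hj'
      have h1 : dist (f 0 (s (j + 1))) (g 0 (s (j + 1))) < δ := hcl0' (j + 1) hj'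
      have h2 : dist (g 0 (s j)) (f 0 (s j)) < δ := by
        rw [dist_comm]; exact hcl0' j (le_of_lt hj')
      have hnum : dist (f 0 (s (j + 1)) + g 0 (s j)) (f 0 (s j) + g 0 (s (j + 1)))
          ≤ dist (f 0 (s (j + 1))) (g 0 (s (j + 1))) + dist (g 0 (s j)) (f 0 (s j)) := by
        rw [add_comm (f 0 (s j)) (g 0 (s (j + 1)))]
        exact aux_dist_add_add hd _ _ _ _
      calc dist (f 0 (s (j + 1)) + g 0 (s j)) (f 0 (s j) + g 0 (s (j + 1)))
          / κ (s (j + 1) - s j)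
          ≤ (δ + δ) / κ (s (j + 1) - s j) := by
            apply div_le_div_of_nonneg_right ?_ hκj.le |>.trans_eq rfl
            · linarith
        _ = δ * (2 / κ (s (j + 1) - s j)) := by ring
    exact aux_rpow_lt
      (Finset.sum_nonneg fun j hj =>
        div_nonneg dist_nonneg (hκs j (Finset.mem_range.mp hj)).le)
      hsum (hδK K₂ hK₂0 (by rw [hKdef]; linarith)) hη.le hp0
  -- bound kSum12J
  have hterm3 : kSum12J κ p f g n t m s < η := by
    unfold kSum12J
    have hsum : ∑ j ∈ range m, ∑ i ∈ range n,
        dist (f (t (i + 1)) (s (j + 1)) + f (t i) (s j)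
              + g (t (i + 1)) (s j) + g (t i) (s (j + 1)))
             (g (t (i + 1)) (s (j + 1)) + g (t i) (s j)
              + f (t (i + 1)) (s j) + f (t i) (s (j + 1)))
          / (κ (t (i + 1) - t i) * κ (s (j + 1) - s j)) ≤ δ * K₃ := by
      rw [hK₃def, Finset.mul_sum]
      apply Finset.sum_le_sum
      intro j hj
      rw [Finset.mul_sum]
      apply Finset.sum_le_sum
      intro i hi
      have hi' := Finset.mem_range.mp hi
      have hj' := Finset.mem_range.mp hj
      have hκi := hκt i hi'
      have hκj := hκs j hj'
      have h1 : dist (f (t (i + 1)) (s (j + 1))) (g (t (i + 1)) (s (j + 1))) < δ :=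
        hcl (i + 1) hi' (j + 1) hj'
      have h2 : dist (f (t i) (s j)) (g (t i) (s j)) < δ :=
        hcl i (le_of_lt hi') j (le_of_lt hj')
      have h3 : dist (g (t (i + 1)) (s j)) (f (t (i + 1)) (s j)) < δ := by
        rw [dist_comm]; exact hcl (i + 1) hi' j (le_of_lt hj')
      have h4 : dist (g (t i) (s (j + 1))) (f (t i) (s (j + 1))) < δ := by
        rw [dist_comm]; exact hcl i (le_of_lt hi') (j + 1) hj'
      have hnum := aux_dist4 hd
        (f (t (i + 1)) (s (j + 1))) (g (t (i + 1)) (s (j + 1)))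
        (f (t i) (s j)) (g (t i) (s j))
        (g (t (i + 1)) (s j)) (f (t (i + 1)) (s j))
        (g (t i) (s (j + 1))) (f (t i) (s (j + 1)))
      calc dist (f (t (i + 1)) (s (j + 1)) + f (t i) (s j)
              + g (t (i + 1)) (s j) + g (t i) (s (j + 1)))
             (g (t (i + 1)) (s (j + 1)) + g (t i) (s j)
              + f (t (i + 1)) (s j) + f (t i) (s (j + 1)))
          / (κ (t (i + 1) - t i) * κ (s (j + 1) - s j))
          ≤ (δ + δ + (δ + δ)) / (κ (t (i + 1) - t i) * κ (s (j + 1) - s j)) := by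
            apply div_le_div_of_nonneg_right ?_ (mul_pos hκi hκj).le |>.trans_eq rfl
            · linarith
        _ = δ * (4 / (κ (t (i + 1) - t i) * κ (s (j + 1) - s j))) := by ring
    exact aux_rpow_lt
      (Finset.sum_nonneg fun j hj => Finset.sum_nonneg fun i hi =>
        div_nonneg dist_nonneg (mul_pos (hκt i (Finset.mem_range.mp hi))
          (hκs j (Finset.mem_range.mp hj))).le)
      hsum (hδK K₃ hK₃0 (by rw [hKdef]; linarith)) hη.le hp0
  have hVPdef : VKapPart κ p f g n t m s
      = kSum1J κ p f g n t + kSum2J κ p f g m s + kSum12J κ p f g n t m s := rfl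
  have hVJfg := hVJ f hf g hgmem
  have hd00 : dist (f 0 0) (g 0 0) < δ := by
    have := hcl 0 (Nat.zero_le n) 0 (Nat.zero_le m)
    rwa [ht0, hs0] at this
  have hrho : rhoKap κ p f g = dist (f 0 0) (g 0 0) + VKapJ κ p f g := rfl
  rw [hrho]
  have : VKapJ κ p f g ≤ ε / 2 + VKapPart κ p f g n t m s := hVJfg
  rw [hVPdef] at this
  have hηε : η = ε / 8 := hηdef
  linarith
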